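/- Let A, B, C > 0, λ > 0, 0 < γ < 1 < p < r with A = B + λC (Nehari constraint at t = 1). If additionally (p+γ−1)A > λ(r+γ−1)C, then ψ(t) = (1/p)A t^p − (1/(1−γ))B t^{1−γ} − (λ/r)C t^r satisfies ψ(1) = (1/p − 1/(1−γ))A + λ(1/(1−γ) − 1/r)C < ((p+γ−1)/(1−γ))·(1/r − 1/p)·A < 0. -/

import Mathlib

/-- Abstract version of `m⁺_λ < 0`: the Nehari constraints force the energy `ψ(1)` to be negative. -/
theorem stmt_7 (A B C lam γ p r : ℝ) (hA : 0 < A) (hB : 0 < B) (hC : 0 < C) (hlam : 0 < lam)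
    (hγ0 : 0 < γ) (hγ1 : γ < 1) (hp : 1 < p) (hpr : p < r)
    (hNehari : A = B + lam * C)
    (hNplus : lam * (r + γ - 1) * C < (p + γ - 1) * A) :
    let ψ : ℝ → ℝ := fun t =>
      (1 / p) * A * t ^ p - (1 / (1 - γ)) * B * t ^ (1 - γ) - (lam / r) * C * t ^ r
    ψ 1 = (1 / p - 1 / (1 - γ)) * A + lam * (1 / (1 - γ) - 1 / r) * C ∧
    ψ 1 < (p + γ - 1) / (1 - γ) * (1 / r - 1 / p) * A ∧
    (p + γ - 1) / (1 - γ) * (1 / r - 1 / p) * A < 0 := by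
  intro ψ
  have h1γ : 0 < 1 - γ := by linarith
  have hp0 : 0 < p := by linarith
  have hr0 : 0 < r := by linarith
  have hpγ : 0 < p + γ - 1 := by linarith
  have hk : 0 < (1 - γ) * p * r := by positivity
  have hψ1 : ψ 1 = (1 / p - 1 / (1 - γ)) * A + lam * (1 / (1 - γ) - 1 / r) * C := by
    simp only [ψ, Real.one_rpow, mul_one]
    have hB' : B = A - lam * C := by linarith
    subst hB'
    field_simp
    ring
  refine ⟨hψ1, ?_, ?_⟩
  · rw [hψ1]
    rw [← mul_lt_mul_iff_of_pos_right hk]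
    have e1 : ((1 / p - 1 / (1 - γ)) * A + lam * (1 / (1 - γ) - 1 / r) * C) * ((1 - γ) * p * r)
        = (1 - γ - p) * A * r + lam * (r - (1 - γ)) * C * p := by
      field_simp
    have e2 : (p + γ - 1) / (1 - γ) * (1 / r - 1 / p) * A * ((1 - γ) * p * r)
        = (p + γ - 1) * (p - r) * A := by
      have h1 : (1 - γ) ≠ 0 := ne_of_gt h1γ
      have h2 : r ≠ 0 := ne_of_gt hr0
      have h3 : p ≠ 0 := ne_of_gt hp0
      field_simp
    rw [e1, e2]
    nlinarith [mul_lt_mul_of_pos_left hNplus hp0]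
  · have h1 : 0 < (p + γ - 1) / (1 - γ) := by positivity
    have h2 : 1 / r - 1 / p < 0 := by
      rw [sub_neg, div_lt_div_iff₀ hr0 hp0]; linarith
    nlinarith [mul_pos h1 hA]
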